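/- arXiv:2106.00204 — 3 statements merged into one kernel-verified Lean document; each statement's English description precedes it below -/
import Mathlib

section
/- Let l ≥ 1 and let k₁,…,k_l be positive integers. Then the function z ↦ Li_{k₁,…,k_l}(z) (defined as the tsum of z^{n_l}/(n₁^{k₁}⋯n_l^{k_l}) over strictly increasing l-tuples 0 < n₁ < ⋯ < n_l) is complex differentiable (holomorphic) on the open unit disc {z : ℂ | ‖z‖ < 1}. -/
/-- The multiple polylogarithm `Li_{k₁,…,k_{l+1}}(z)`, defined as the sum of
`z^{n_{l+1}} / (n₁^{k₁} ⋯ n_{l+1}^{k_{l+1}})` over strictly increasing `(l+1)`-tuples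
of positive integers `0 < n₁ < ⋯ < n_{l+1}`. -/
noncomputable def MPL {l : ℕ} (k : Fin (l + 1) → ℕ) (z : ℂ) : ℂ :=
  ∑' n : {n : Fin (l + 1) → ℕ // StrictMono n ∧ ∀ i, 0 < n i},
    z ^ (n.1 (Fin.last l)) / ∏ i, (n.1 i : ℂ) ^ k i

/-- Summability of products of geometric terms over pi types. -/
lemma summable_pi_geometric (m : ℕ) (ρ : ℝ) (h0 : 0 ≤ ρ) (h1 : ρ < 1) :
    Summable (fun n : Fin m → ℕ => ∏ i, ρ ^ n i) := by
  induction m with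
  | zero =>
      simpa using (summable_of_finite_support (Set.toFinite _) :
        Summable (fun _ : Fin 0 → ℕ => (1 : ℝ)))
  | succ m ih =>
      have hgeo : Summable (fun n : ℕ => ρ ^ n) := summable_geometric_of_lt_one h0 h1
      have h := hgeo.mul_of_nonneg ih (fun n => pow_nonneg h0 n)
        (fun n => Finset.prod_nonneg fun i _ => pow_nonneg h0 _)
      have h2 := ((Fin.consEquiv (fun _ : Fin (m + 1) => ℕ)).symm.summable_iff
        (f := fun p : ℕ × (Fin m → ℕ) => ρ ^ p.1 * ∏ i, ρ ^ p.2 i)).mpr h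
      refine h2.congr fun n => ?_
      show ρ ^ n 0 * ∏ i : Fin m, ρ ^ Fin.tail n i = _
      rw [Fin.prod_univ_succ]
      rfl

/-- For positive integers `k 0, …, k (Fin.last l)`, the multiple
polylogarithm `z ↦ Li_{k₁,…,k_{l+1}}(z)` is complex differentiable (holomorphic)
on the open unit disc `{z : ℂ | ‖z‖ < 1}`. -/
theorem mpl_differentiableOn (l : ℕ) (k : Fin (l + 1) → ℕ) (hk : ∀ i, 0 < k i) :
    DifferentiableOn ℂ (fun z : ℂ => MPL k z) {z : ℂ | ‖z‖ < 1} := by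
  intro z hz
  simp only [Set.mem_setOf_eq] at hz
  set r : ℝ := (‖z‖ + 1) / 2 with hr
  have hzr : ‖z‖ < r := by rw [hr]; linarith
  have hr0 : 0 ≤ r := le_trans (norm_nonneg z) hzr.le
  have hr1 : r < 1 := by rw [hr]; linarith
  set ρ : ℝ := r ^ ((l + 1 : ℝ)⁻¹) with hρ
  have hρ0 : 0 ≤ ρ := Real.rpow_nonneg hr0 _
  have hρ1 : ρ < 1 := by
    apply Real.rpow_lt_one hr0 hr1
    positivity
  have hρpow : ρ ^ (l + 1) = r := by
    rw [hρ, ← Real.rpow_natCast (r ^ _) (l + 1), ← Real.rpow_mul hr0]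
    push_cast
    rw [inv_mul_cancel₀ (by positivity), Real.rpow_one]
  -- summable majorant over the subtype
  have hsum : Summable (fun n : {n : Fin (l + 1) → ℕ // StrictMono n ∧ ∀ i, 0 < n i} =>
      ∏ i, ρ ^ n.1 i) :=
    (summable_pi_geometric (l + 1) ρ hρ0 hρ1).subtype _
  have hopen : IsOpen (Metric.ball (0 : ℂ) r) := Metric.isOpen_ball
  have hdiff : DifferentiableOn ℂ (fun w : ℂ => MPL k w) (Metric.ball (0 : ℂ) r) := by
    unfold MPL
    apply Complex.differentiableOn_tsum_of_summable_norm hsum ?_ hopen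
    · rintro ⟨n, hmono, hpos⟩ w hw
      rw [mem_ball_zero_iff] at hw
      have hden : (1 : ℝ) ≤ ‖∏ i, (n i : ℂ) ^ k i‖ := by
        rw [norm_prod]
        calc (1 : ℝ) = ∏ _i : Fin (l + 1), 1 := by simp
          _ ≤ ∏ i, ‖(n i : ℂ) ^ k i‖ := by
              apply Finset.prod_le_prod (by simp)
              intro i _
              rw [norm_pow, Complex.norm_natCast]
              exact one_le_pow₀ (by exact_mod_cast hpos i)
      calc ‖w ^ n (Fin.last l) / ∏ i, (n i : ℂ) ^ k i‖
          = ‖w‖ ^ n (Fin.last l) / ‖∏ i, (n i : ℂ) ^ k i‖ := by rw [norm_div, norm_pow]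
        _ ≤ ‖w‖ ^ n (Fin.last l) := div_le_self (by positivity) hden
        _ ≤ r ^ n (Fin.last l) := pow_le_pow_left₀ (norm_nonneg w) hw.le _
        _ = ∏ _i : Fin (l + 1), ρ ^ n (Fin.last l) := by
            rw [Finset.prod_const, Finset.card_univ, Fintype.card_fin, ← pow_mul, ← hρpow,
              ← pow_mul, mul_comm]
        _ ≤ ∏ i, ρ ^ n i := by
            apply Finset.prod_le_prod (fun i _ => pow_nonneg hρ0 _)
            intro i _
            exact pow_le_pow_of_le_one hρ0 hρ1.le (hmono.monotone (Fin.le_last i))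
    · intro n
      apply DifferentiableOn.div (differentiableOn_pow _) (differentiableOn_const _)
      intro w _
      apply Finset.prod_ne_zero_iff.mpr
      intro i _
      exact pow_ne_zero _ (Nat.cast_ne_zero.mpr (n.2.2 i).ne')
  exact (hdiff.differentiableAt (hopen.mem_nhds (by rwa [mem_ball_zero_iff]))).differentiableWithinAt
end

section
/- Let l ≥ 1, let k₁,…,k_l be positive integers with k_l ≥ 2, and let z be a complex number with 0 < ‖z‖ < 1. Then the function Li_{k₁,…,k_l} has derivative Li_{k₁,…,k_{l−1},k_l−1}(z)/z at z, i.e. HasDerivAt Li_{k₁,…,k_l} (Li_{k₁,…,k_{l−1},k_l−1}(z)/z) z. -/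
lemma summable_pi_prod {f : ℕ → ℝ} (hf : Summable f) (h0 : ∀ x, 0 ≤ f x) (n : ℕ) :
    Summable (fun g : Fin n → ℕ => ∏ j, f (g j)) := by
  induction n with
  | zero => exact .of_finite
  | succ n ih =>
    have h0' : 0 ≤ f := fun x => h0 x
    have hp : (0:(Fin n → ℕ) → ℝ) ≤ fun g => ∏ j, f (g j) :=
      fun g => Finset.prod_nonneg fun j _ => h0 _
    have key : Summable fun p : ℕ × (Fin n → ℕ) => f p.1 * ∏ j, f (p.2 j) :=
      @Summable.mul_of_nonneg ℕ (Fin n → ℕ) f (fun g => ∏ j, f (g j)) hf ih h0' hp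
    rw [← (Fin.consEquiv (fun _ : Fin (n+1) => ℕ)).summable_iff]
    convert key using 1
    funext p
    simp [Fin.consEquiv, Fin.prod_univ_succ]



/-- For positive integer exponents `k₁,…,k_l` with last exponent `k_l ≥ 2`
and `0 < ‖z‖ < 1`, the multiple polylogarithm `Li_{k₁,…,k_l}` has derivative
`Li_{k₁,…,k_{l−1},k_l−1}(z) / z` at `z`. -/
theorem mpl_hasDerivAt_dz_over_z (l : ℕ) (k : Fin (l + 1) → ℕ) (hk : ∀ i, 0 < k i)
    (hkl : 2 ≤ k (Fin.last l)) (z : ℂ) (hz0 : 0 < ‖z‖) (hz1 : ‖z‖ < 1) :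
    HasDerivAt (MPL k)
      (MPL (Function.update k (Fin.last l) (k (Fin.last l) - 1)) z / z) z := by
  classical
  set S := {n : Fin (l + 1) → ℕ // StrictMono n ∧ ∀ i, 0 < n i} with hS
  set m : S → ℕ := fun n => n.1 (Fin.last l) with hm
  set D : S → ℂ := fun n => ∏ i, (n.1 i : ℂ) ^ k i with hD
  -- basic facts
  have hm1 : ∀ n : S, 1 ≤ m n := fun n => n.2.2 _
  have hmle : ∀ (n : S) (j : Fin (l+1)), n.1 j ≤ m n :=
    fun n j => n.2.1.monotone (Fin.le_last j)
  have hDnat : ∀ n : S, D n = ((∏ i, (n.1 i) ^ k i : ℕ) : ℂ) := by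
    intro n; simp [hD]
  have hD1 : ∀ n : S, (1:ℝ) ≤ ‖D n‖ := by
    intro n
    rw [hDnat n]
    rw [Complex.norm_natCast]
    have : 1 ≤ ∏ i, (n.1 i) ^ k i :=
      Finset.one_le_prod' fun i _ => Nat.one_le_pow _ _ (n.2.2 i)
    exact_mod_cast this
  have hDne : ∀ n : S, D n ≠ 0 := by
    intro n h
    have := hD1 n
    rw [h, norm_zero] at this; linarith
  -- radii
  set r : ℝ := (2 * ‖z‖ + 1) / 3 with hr
  set s : ℝ := (‖z‖ + 2) / 3 with hs
  have hzr : ‖z‖ < r := by rw [hr]; linarith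
  have hr0 : 0 < r := lt_of_le_of_lt (norm_nonneg z) hzr
  have hrs : r < s := by rw [hr, hs]; linarith
  have hs1 : s < 1 := by rw [hs]; linarith
  have hs0 : 0 < s := lt_trans hr0 hrs
  set c : ℝ := ((l:ℝ)+1)⁻¹ with hc
  have hc0 : 0 < c := by positivity
  set t : ℝ := s ^ c with htdef
  have ht0 : 0 < t := Real.rpow_pos_of_pos hs0 c
  have ht1 : t < 1 := Real.rpow_lt_one hs0.le hs1 hc0
  -- t ^ (M * (l+1)) = s ^ M
  have htpow : ∀ M : ℕ, t ^ (M * (l+1)) = s ^ M := by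
    intro M
    rw [htdef, ← Real.rpow_natCast (s ^ c) (M * (l+1)), ← Real.rpow_mul hs0.le,
      ← Real.rpow_natCast s M]
    congr 1
    rw [hc]
    push_cast
    field_simp
  -- key comparison with product of t powers
  have hts : ∀ n : S, s ^ (m n) ≤ ∏ j, t ^ (n.1 j) := by
    intro n
    have h1 : ∀ j : Fin (l+1), t ^ (m n) ≤ t ^ (n.1 j) :=
      fun j => pow_le_pow_of_le_one ht0.le ht1.le (hmle n j)
    calc s ^ (m n) = t ^ (m n * (l+1)) := (htpow (m n)).symm
      _ = ∏ _j : Fin (l+1), t ^ (m n) := by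
          rw [Finset.prod_const, Finset.card_univ, Fintype.card_fin, ← pow_mul]
      _ ≤ ∏ j, t ^ (n.1 j) :=
          Finset.prod_le_prod (fun j _ => pow_nonneg ht0.le _) (fun j _ => h1 j)
  have hT : Summable (fun n : S => ∏ j, t ^ (n.1 j)) := by
    have h := summable_pi_prod (f := fun x => t ^ x)
      (summable_geometric_of_lt_one ht0.le ht1) (fun x => pow_nonneg ht0.le x) (l+1)
    exact h.comp_injective Subtype.val_injective
  -- constant C bounding M * r^(M-1) ≤ C * s^M
  set x : ℝ := r / s with hx
  have hx0 : 0 ≤ x := by positivity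
  have hx1 : x < 1 := (div_lt_one hs0).mpr hrs
  have hbsum : Summable (fun j : ℕ => ((j:ℝ)+1) * x ^ j) := by
    have h1 : Summable (fun j : ℕ => (j:ℝ)^1 * x ^ j) :=
      summable_pow_mul_geometric_of_norm_lt_one 1 (by rwa [Real.norm_eq_abs, abs_of_nonneg hx0])
    have h2 : Summable (fun j : ℕ => x ^ j) := summable_geometric_of_lt_one hx0 hx1
    have := h1.add h2
    convert this using 1
    funext j; ring
  set C : ℝ := ∑' j : ℕ, ((j:ℝ)+1) * x ^ j with hC
  have hC0 : 0 ≤ C := tsum_nonneg fun j => by positivity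
  have hCb : ∀ M : ℕ, 1 ≤ M → (M:ℝ) * r ^ (M-1) ≤ (C / s) * s ^ M := by
    intro M hM
    obtain ⟨j, rfl⟩ : ∃ j, M = j + 1 := ⟨M - 1, (Nat.succ_pred_eq_of_pos hM).symm⟩
    have hr_eq : r = x * s := by rw [hx]; field_simp
    have hle : ((j:ℝ)+1) * x ^ j ≤ C := Summable.le_tsum hbsum j (fun i _ => by positivity)
    have : ((j:ℝ)+1+0) * r ^ j = (((j:ℝ)+1) * x ^ j) * s ^ j := by
      rw [hr_eq, mul_pow]; ring
    simp only [Nat.add_sub_cancel]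
    push_cast
    calc ((j:ℝ)+1) * r ^ j = (((j:ℝ)+1) * x ^ j) * s ^ j := by rw [hr_eq, mul_pow]; ring
      _ ≤ C * s ^ j := by
          apply mul_le_mul_of_nonneg_right hle (by positivity)
      _ = (C / s) * s ^ (j+1) := by rw [pow_succ]; field_simp
  -- the bound u
  set u : S → ℝ := fun n => (C / s) * ∏ j, t ^ (n.1 j) with hu
  have hus : Summable u := hT.mul_left _
  have hCs0 : 0 ≤ C / s := by positivity
  -- derivative bound on the ball
  have hbound : ∀ (n : S) (w : ℂ), ‖w‖ ≤ r → ‖(m n : ℂ) * w ^ (m n - 1) / D n‖ ≤ u n := by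
    intro n w hw
    have h1 : ‖(m n : ℂ) * w ^ (m n - 1) / D n‖ ≤ ‖(m n : ℂ) * w ^ (m n - 1)‖ := by
      rw [norm_div]
      exact div_le_self (norm_nonneg _) (hD1 n)
    have h2 : ‖(m n : ℂ) * w ^ (m n - 1)‖ ≤ (m n : ℝ) * r ^ (m n - 1) := by
      rw [norm_mul, norm_pow, Complex.norm_natCast]
      exact mul_le_mul_of_nonneg_left
        (pow_le_pow_left₀ (norm_nonneg w) hw _) (Nat.cast_nonneg _)
    calc ‖(m n : ℂ) * w ^ (m n - 1) / D n‖ ≤ (m n : ℝ) * r ^ (m n - 1) := h1.trans h2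
      _ ≤ (C / s) * s ^ (m n) := hCb (m n) (hm1 n)
      _ ≤ (C / s) * ∏ j, t ^ (n.1 j) := mul_le_mul_of_nonneg_left (hts n) hCs0
  -- summability at z
  have hg0 : Summable (fun n : S => z ^ (m n) / D n) := by
    apply Summable.of_norm_bounded hT
    intro n
    rw [norm_div, norm_pow]
    calc ‖z‖ ^ (m n) / ‖D n‖ ≤ ‖z‖ ^ (m n) := div_le_self (by positivity) (hD1 n)
      _ ≤ s ^ (m n) := pow_le_pow_left₀ (norm_nonneg z) (hzr.le.trans hrs.le) _
      _ ≤ ∏ j, t ^ (n.1 j) := hts n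
  -- main derivative statement
  have hmain : HasDerivAt (fun w => ∑' n : S, w ^ (m n) / D n)
      (∑' n : S, (m n : ℂ) * z ^ (m n - 1) / D n) z :=
    hasDerivAt_tsum_of_isPreconnected
      (g := fun (n : S) (w : ℂ) => w ^ (m n) / D n)
      (g' := fun (n : S) (w : ℂ) => (m n : ℂ) * w ^ (m n - 1) / D n)
      hus Metric.isOpen_ball (convex_ball (0:ℂ) r).isPreconnected
      (fun n w _ => (hasDerivAt_pow (m n) w).div_const (D n))
      (fun n w hw => hbound n w (mem_ball_zero_iff.mp hw).le)
      (mem_ball_zero_iff.mpr hzr) hg0 (mem_ball_zero_iff.mpr hzr)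
  have hzne : z ≠ 0 := by
    intro h; rw [h, norm_zero] at hz0; exact lt_irrefl _ hz0
  -- identify the function with MPL k
  have hfun : (fun w => ∑' n : S, w ^ (m n) / D n) = MPL k := rfl
  rw [hfun] at hmain
  -- identify the value
  have hval : MPL (Function.update k (Fin.last l) (k (Fin.last l) - 1)) z / z
      = ∑' n : S, (m n : ℂ) * z ^ (m n - 1) / D n := by
    rw [MPL, ← tsum_div_const]
    apply tsum_congr
    intro n
    set k' := Function.update k (Fin.last l) (k (Fin.last l) - 1) with hk'
    set P : ℂ := ∏ i, (n.1 i : ℂ) ^ k' i with hP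
    have hsplit : ∀ e : Fin (l+1) → ℕ, (∏ i, ((n.1 i : ℂ)) ^ e i)
        = ((n.1 (Fin.last l) : ℂ)) ^ e (Fin.last l)
          * ∏ i ∈ Finset.univ \ {Fin.last l}, ((n.1 i : ℂ)) ^ e i :=
      fun e => Finset.prod_eq_mul_prod_sdiff_singleton_of_mem (Finset.mem_univ _) _
    have hoff : (∏ i ∈ Finset.univ \ {Fin.last l}, ((n.1 i : ℂ)) ^ k' i)
        = ∏ i ∈ Finset.univ \ {Fin.last l}, ((n.1 i : ℂ)) ^ k i :=
      Finset.prod_congr rfl fun i hi => by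
        rw [hk', Function.update_of_ne (by simpa using (Finset.mem_sdiff.mp hi).2)]
    have hc2 : ((n.1 (Fin.last l) : ℂ)) ^ (k (Fin.last l) - 1) * (n.1 (Fin.last l) : ℂ)
        = (n.1 (Fin.last l) : ℂ) ^ (k (Fin.last l)) := by
      rw [← pow_succ, Nat.sub_add_cancel (le_trans one_le_two hkl)]
    have hPD : (m n : ℂ) * P = D n := by
      have hDn : D n = ∏ i, ((n.1 i : ℂ)) ^ k i := rfl
      show ((n.1 (Fin.last l) : ℕ) : ℂ) * P = D n
      rw [hP, hDn, hsplit k', hsplit k, hoff, hk', Function.update_self, ← hc2]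
      ring
    have hmne : ((m n : ℕ) : ℂ) ≠ 0 := Nat.cast_ne_zero.mpr (Nat.one_le_iff_ne_zero.mp (hm1 n))
    have hPne : P ≠ 0 := by
      intro h
      apply hDne n
      rw [← hPD, h, mul_zero]
    have hzm : z ^ (m n) = z ^ (m n - 1) * z := by
      rw [← pow_succ, Nat.sub_add_cancel (hm1 n)]
    show z ^ (m n) / P / z = (m n : ℂ) * z ^ (m n - 1) / D n
    rw [← hPD, hzm]
    field_simp
  rw [hval]
  exact hmain
end

section
/- Let l ≥ 2, let k₁,…,k_{l−1} be positive integers, and let z be a complex number with ‖z‖ < 1. Then the function Li_{k₁,…,k_{l−1},1} has derivative Li_{k₁,…,k_{l−1}}(z)/(1−z) at z, i.e. HasDerivAt Li_{k₁,…,k_{l−1},1} (Li_{k₁,…,k_{l−1}}(z)/(1−z)) z. -/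
abbrev SM (l : ℕ) := {n : Fin (l + 1) → ℕ // StrictMono n ∧ ∀ i, 0 < n i}

/-- The equivalence `SM l × ℕ ≃ SM (l+1)` given by appending `last + g + 1`. -/
def smEquiv (l : ℕ) : SM l × ℕ ≃ SM (l + 1) where
  toFun p := ⟨Fin.snoc p.1.1 (p.1.1 (Fin.last l) + p.2 + 1), by
    obtain ⟨⟨a, ha, hpos⟩, g⟩ := p
    refine ⟨Fin.strictMono_iff_lt_succ.2 fun i => ?_, fun i => ?_⟩
    · induction i using Fin.lastCases with
      | last =>
        have h1 : (Fin.last l).succ = Fin.last (l + 1) := rfl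
        rw [h1, Fin.snoc_last, Fin.snoc_castSucc]
        omega
      | cast j =>
        rw [Fin.succ_castSucc, Fin.snoc_castSucc, Fin.snoc_castSucc]
        exact Fin.strictMono_iff_lt_succ.1 ha j
    · induction i using Fin.lastCases with
      | last => rw [Fin.snoc_last]; omega
      | cast j => rw [Fin.snoc_castSucc]; exact hpos j⟩
  invFun b := (⟨fun i => b.1 i.castSucc, fun i j hij => b.2.1 (by exact_mod_cast hij),
      fun i => b.2.2 _⟩,
      b.1 (Fin.last (l + 1)) - b.1 ((Fin.last l).castSucc) - 1)
  left_inv p := by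
    obtain ⟨⟨a, ha, hpos⟩, g⟩ := p
    refine Prod.ext (Subtype.ext (funext fun i => ?_)) ?_
    · simp
    · simp only [Fin.snoc_last]
      rw [show ((Fin.last l).castSucc : Fin (l + 2)) = (Fin.last l).castSucc from rfl,
        Fin.snoc_castSucc]
      omega
  right_inv b := by
    refine Subtype.ext (funext fun i => ?_)
    show (Fin.snoc (fun i => b.1 i.castSucc)
      (b.1 ((Fin.last l).castSucc) + (b.1 (Fin.last (l + 1)) - b.1 ((Fin.last l).castSucc) - 1) + 1)
      : Fin (l + 2) → ℕ) i = b.1 i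
    induction i using Fin.lastCases with
    | last =>
      rw [Fin.snoc_last]
      have h := b.2.1 (show ((Fin.last l).castSucc : Fin (l + 2)) < Fin.last (l + 1) by
        simp [Fin.lt_iff_val_lt_val])
      omega
    | cast j => rw [Fin.snoc_castSucc]

lemma smEquiv_coe (l : ℕ) (p : SM l × ℕ) :
    ((smEquiv l) p).1 = Fin.snoc p.1.1 (p.1.1 (Fin.last l) + p.2 + 1) := rfl

lemma summable_r {r : ℝ} (h0 : 0 ≤ r) (h1 : r < 1) (l : ℕ) :
    Summable fun n : SM l => r ^ n.1 (Fin.last l) := by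
  induction l with
  | zero =>
    have hg : Summable fun j : ℕ => r ^ j := summable_geometric_of_lt_one h0 h1
    have : Function.Injective fun n : SM 0 => n.1 (Fin.last 0) := by
      intro n n' h
      exact Subtype.ext (funext fun i => by rw [Fin.eq_zero i, show Fin.last 0 = 0 from rfl] at *; exact h)
    exact hg.comp_injective this
  | succ l ih =>
    rw [← (smEquiv l).summable_iff]
    have : (fun n : SM (l+1) => r ^ n.1 (Fin.last (l+1))) ∘ (smEquiv l)
        = fun p : SM l × ℕ => (r ^ p.1.1 (Fin.last l) * r) * r ^ p.2 := by
      funext p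
      simp only [Function.comp_apply, smEquiv_coe, Fin.snoc_last]
      ring
    rw [this]
    exact (ih.mul_right r).mul_of_nonneg (summable_geometric_of_lt_one h0 h1)
      (fun p => by positivity) (fun j => by positivity)

lemma one_le_prod_pow {l : ℕ} (k : Fin (l + 1) → ℕ) (n : SM l) :
    1 ≤ ∏ i, (n.1 i) ^ k i :=
  Finset.one_le_prod' fun i _ => Nat.one_le_pow _ _ (n.2.2 i)

lemma prod_cast {l : ℕ} (k : Fin (l + 1) → ℕ) (n : SM l) :
    (∏ i, (n.1 i : ℂ) ^ k i) = ((∏ i, (n.1 i) ^ k i : ℕ) : ℂ) := by push_cast; rfl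

lemma summable_norm_mpl_term {l : ℕ} (k : Fin (l + 1) → ℕ) {z : ℂ} (hz : ‖z‖ < 1) :
    Summable fun n : SM l => ‖z ^ n.1 (Fin.last l) / ∏ i, (n.1 i : ℂ) ^ k i‖ := by
  apply (summable_r (norm_nonneg z) hz l).of_nonneg_of_le (fun n => norm_nonneg _)
  intro n
  rw [prod_cast, norm_div, norm_pow, Complex.norm_natCast]
  have h1 : (1 : ℝ) ≤ ((∏ i, (n.1 i) ^ k i : ℕ) : ℝ) := by
    exact_mod_cast one_le_prod_pow k n
  calc ‖z‖ ^ n.1 (Fin.last l) / ((∏ i, (n.1 i) ^ k i : ℕ) : ℝ)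
      ≤ ‖z‖ ^ n.1 (Fin.last l) / 1 := by
        apply div_le_div_of_nonneg_left (by positivity) one_pos h1
    _ = ‖z‖ ^ n.1 (Fin.last l) := by rw [div_one]

/-- For `l = m + 2 ≥ 2`, positive integer exponents `k₁,…,k_{l−1}` (indexed
by `Fin (m+1)`), and `‖z‖ < 1`, the multiple polylogarithm `Li_{k₁,…,k_{l−1},1}`
(whose exponent tuple is `Fin.snoc k 1`) has derivative `Li_{k₁,…,k_{l−1}}(z) / (1 − z)`
at `z`. -/
theorem mpl_hasDerivAt_dz_over_one_sub_z (m : ℕ) (k : Fin (m + 1) → ℕ)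
    (hk : ∀ i, 0 < k i) (z : ℂ) (hz : ‖z‖ < 1) :
    HasDerivAt (MPL (Fin.snoc k 1 : Fin (m + 1 + 1) → ℕ))
      (MPL k z / (1 - z)) z := by
  set k' : Fin (m + 1 + 1) → ℕ := Fin.snoc k 1 with hk'
  set r : ℝ := (1 + ‖z‖) / 2 with hrdef
  have hzr : ‖z‖ < r := by rw [hrdef]; linarith
  have hr0 : 0 ≤ r := le_trans (norm_nonneg z) hzr.le
  have hr1 : r < 1 := by rw [hrdef]; linarith
  set f : SM (m + 1) → ℂ → ℂ := fun n y =>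
    y ^ n.1 (Fin.last (m + 1)) / ∏ i, (n.1 i : ℂ) ^ k' i with hf
  set f' : SM (m + 1) → ℂ → ℂ := fun n y =>
    (n.1 (Fin.last (m + 1)) : ℂ) * y ^ (n.1 (Fin.last (m + 1)) - 1)
      / ∏ i, (n.1 i : ℂ) ^ k' i with hf'
  set u : SM (m + 1) → ℝ := fun n => r ^ (n.1 (Fin.last (m + 1)) - 1) with hu
  -- the natural-number product, and its lower bound by the last entry
  have hNP : ∀ n : SM (m + 1), n.1 (Fin.last (m + 1)) ≤ ∏ i, (n.1 i) ^ k' i := by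
    intro n
    rw [Fin.prod_univ_castSucc]
    have h1 : 1 ≤ ∏ i : Fin (m + 1), (n.1 i.castSucc) ^ k' i.castSucc :=
      Finset.one_le_prod' fun i _ => Nat.one_le_pow _ _ (n.2.2 _)
    have h2 : k' (Fin.last (m + 1)) = 1 := Fin.snoc_last _ _
    rw [h2, pow_one]
    exact Nat.le_mul_of_pos_left _ h1
  -- summability of the bound
  have hu_sum : Summable u := by
    rw [← (smEquiv m).summable_iff]
    have : u ∘ (smEquiv m) = fun p : SM m × ℕ => r ^ p.1.1 (Fin.last m) * r ^ p.2 := by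
      funext p
      simp only [Function.comp_apply, hu, smEquiv_coe, Fin.snoc_last]
      rw [Nat.add_sub_cancel, pow_add]
    rw [this]
    exact (summable_r hr0 hr1 m).mul_of_nonneg (summable_geometric_of_lt_one hr0 hr1)
      (fun p => by positivity) (fun j => by positivity)
  -- the series converges at z
  have hsum0 : Summable fun n => f n z := (summable_norm_mpl_term k' hz).of_norm
  -- termwise derivatives
  have hderiv : ∀ (n : SM (m + 1)) (y : ℂ), y ∈ Metric.ball (0 : ℂ) r →
      HasDerivAt (f n) (f' n y) y := fun n y _ =>
    (hasDerivAt_pow (n.1 (Fin.last (m + 1))) y).div_const _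
  -- the derivative bound
  have hbound : ∀ (n : SM (m + 1)) (y : ℂ), y ∈ Metric.ball (0 : ℂ) r →
      ‖f' n y‖ ≤ u n := by
    intro n y hy
    have hyr : ‖y‖ ≤ r := by
      rw [Metric.mem_ball, dist_zero_right] at hy; exact hy.le
    set N := n.1 (Fin.last (m + 1)) with hN
    rw [hf']
    simp only
    rw [prod_cast, norm_div, norm_mul, norm_pow, Complex.norm_natCast, Complex.norm_natCast]
    set P : ℝ := ((∏ i, (n.1 i) ^ k' i : ℕ) : ℝ) with hP
    have hP0 : 0 < P := by
      rw [hP]; exact_mod_cast lt_of_lt_of_le Nat.one_pos (one_le_prod_pow k' n)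
    have hNP' : (N : ℝ) ≤ P := by rw [hP]; exact_mod_cast hNP n
    rw [div_le_iff₀ hP0]
    have h1 : ‖y‖ ^ (N - 1) ≤ r ^ (N - 1) := pow_le_pow_left₀ (norm_nonneg y) hyr _
    calc (N : ℝ) * ‖y‖ ^ (N - 1) ≤ P * r ^ (N - 1) :=
          mul_le_mul hNP' h1 (by positivity) hP0.le
      _ = r ^ (N - 1) * P := mul_comm _ _
  have hzball : z ∈ Metric.ball (0 : ℂ) r := by
    rw [Metric.mem_ball, dist_zero_right]; exact hzr
  have key := hasDerivAt_tsum_of_isPreconnected hu_sum Metric.isOpen_ball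
    (convex_ball (0 : ℂ) r).isPreconnected hderiv hbound hzball hsum0 hzball
  -- identify the function
  have hfun : (fun y => ∑' n, f n y) = MPL k' := rfl
  rw [hfun] at key
  -- identify the derivative value
  have hval : (∑' n, f' n z) = MPL k z / (1 - z) := by
    rw [← Equiv.tsum_eq (smEquiv m) (fun n => f' n z)]
    have hterm : ∀ p : SM m × ℕ, f' (smEquiv m p) z
        = (z ^ p.1.1 (Fin.last m) / ∏ i, (p.1.1 i : ℂ) ^ k i) * z ^ p.2 := by
      intro p
      rw [hf']
      simp only [smEquiv_coe, Fin.snoc_last]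
      have hprod : (∏ i, ((Fin.snoc p.1.1 (p.1.1 (Fin.last m) + p.2 + 1) : Fin (m + 2) → ℕ) i : ℂ) ^ k' i)
          = (∏ i, (p.1.1 i : ℂ) ^ k i) * ((p.1.1 (Fin.last m) + p.2 + 1 : ℕ) : ℂ) := by
        rw [Fin.prod_univ_castSucc]
        simp [hk', Fin.snoc_castSucc, Fin.snoc_last]
      have hNne : ((p.1.1 (Fin.last m) + p.2 + 1 : ℕ) : ℂ) ≠ 0 := by
        exact Nat.cast_ne_zero.mpr (Nat.succ_ne_zero _)
      rw [hprod, Nat.add_sub_cancel, mul_comm (∏ i, (p.1.1 i : ℂ) ^ k i)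
        ((p.1.1 (Fin.last m) + p.2 + 1 : ℕ) : ℂ), mul_div_mul_left _ _ hNne, pow_add]
      ring
    rw [tsum_congr hterm]
    have hF : Summable fun a : SM m =>
        ‖z ^ a.1 (Fin.last m) / ∏ i, (a.1 i : ℂ) ^ k i‖ := summable_norm_mpl_term k hz
    have hG : Summable fun j : ℕ => ‖z ^ j‖ := by
      simpa only [norm_pow] using summable_geometric_of_lt_one (norm_nonneg z) hz
    rw [← tsum_mul_tsum_of_summable_norm hF hG, tsum_geometric_of_norm_lt_one hz,
      div_eq_mul_inv]
    rfl
  rw [hval] at key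
  exact key
end
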